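/- Define Φ̂ : ℝ → ℝ by Φ̂(t) = (2/π)√(e^{−t} − e^{−2t}) for t ≥ 0 and Φ̂(t) = 0 for t ≤ 0, and define Φ(t) = ∑_{k ∈ ℤ} Φ̂(t + k) (the sum converges for every t). Then Φ(0) < Φ(log 2); equivalently, ∑_{k=1}^∞ √(e^{−k} − e^{−2k}) < ∑_{k=0}^∞ √(e^{−(log 2 + k)} − e^{−2(log 2 + k)}). In particular Φ is not a constant function. -/

import Mathlib

/-!
With `x = e^{-t}` the profile of `Φ̂` is `√(x - x²)`, and `x - x²` increases on `x ≤ 1/2`,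
so the profile is strictly decreasing on `[log 2, ∞)`. For `0 ≤ t ≤ 1` only the shifts
`t + n`, `n ∈ ℕ`, contribute to `Φ(t)`, and the profile vanishes at `0`; hence `Φ(0)` and
`Φ(log 2)` are, up to the factor `2/π`, the sums over `k` of the profile at `k + 1` and at
`log 2 + k`, and every term of the second sum is strictly larger.
-/

open Real

/-- The density `Φ̂` of the limit measure: `(2/π)√(e^{-t} - e^{-2t})` for `t ≥ 0`,
and `0` for `t ≤ 0`. -/
noncomputable def Phihat (t : ℝ) : ℝ :=
  if 0 ≤ t then (2 / Real.pi) * Real.sqrt (Real.exp (-t) - Real.exp (-2 * t)) else 0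

/-- The periodization `Φ(t) = ∑_{k ∈ ℤ} Φ̂(t + k)`. -/
noncomputable def Phi (t : ℝ) : ℝ := ∑' k : ℤ, Phihat (t + k)

noncomputable def sqrtExpGap (t : ℝ) : ℝ := √(exp (-t) - exp (-2 * t))

lemma sqrtExpGap_eq (t : ℝ) : sqrtExpGap t = √(exp (-t) - exp (-t) ^ 2) := by
  rw [sqrtExpGap, sq, ← exp_add]
  ring_nf

lemma sqrtExpGap_nonneg (t : ℝ) : 0 ≤ sqrtExpGap t := sqrt_nonneg _

lemma sqrtExpGap_eq_zero_of_nonpos {t : ℝ} (ht : t ≤ 0) : sqrtExpGap t = 0 := by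
  have hx : 1 ≤ exp (-t) := one_le_exp (by linarith)
  rw [sqrtExpGap_eq, sqrt_eq_zero']
  nlinarith

lemma sqrtExpGap_le_exp_half (t : ℝ) : sqrtExpGap t ≤ exp (-t / 2) := by
  rw [exp_half]
  exact sqrt_le_sqrt (by linarith [exp_pos (-2 * t)])

lemma summable_sqrtExpGap_add_nat (c : ℝ) : Summable fun n : ℕ ↦ sqrtExpGap (c + n) := by
  have hexp : Summable fun n : ℕ ↦ exp (-c / 2) * exp (n * (-1 / 2)) :=
    (summable_exp_nat_mul_iff.mpr (by norm_num)).mul_left _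
  refine hexp.of_nonneg_of_le (fun n ↦ sqrtExpGap_nonneg _) fun n ↦ ?_
  calc sqrtExpGap (c + n) ≤ exp (-(c + n) / 2) := sqrtExpGap_le_exp_half _
    _ = exp (-c / 2) * exp (n * (-1 / 2)) := by rw [← exp_add]; ring_nf

lemma summable_sqrtExpGap_add_int (t : ℝ) : Summable fun k : ℤ ↦ sqrtExpGap (t + k) := by
  refine .of_nat_of_neg_add_one (by simpa using summable_sqrtExpGap_add_nat t) ?_
  refine summable_of_ne_finset_zero (s := Finset.range ⌈t⌉₊) fun n hn ↦ ?_
  have htn : t ≤ n := Nat.ceil_le.mp (by simpa using hn)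
  exact sqrtExpGap_eq_zero_of_nonpos (by push_cast; linarith)

lemma tsum_sqrtExpGap_add_int {t : ℝ} (ht : t ≤ 1) :
    ∑' k : ℤ, sqrtExpGap (t + k) = ∑' n : ℕ, sqrtExpGap (t + n) := by
  have hneg : ∀ n : ℕ, sqrtExpGap (t + ((-(n + 1) : ℤ) : ℝ)) = 0 := fun n ↦
    sqrtExpGap_eq_zero_of_nonpos (by push_cast; linarith [n.cast_nonneg (α := ℝ)])
  rw [tsum_of_nat_of_neg_add_one (by simpa using summable_sqrtExpGap_add_nat t)
    (by simp only [hneg]; exact summable_zero)]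
  simp only [hneg, tsum_zero, add_zero, Int.cast_natCast]

lemma sqrtExpGap_strictAntiOn : StrictAntiOn sqrtExpGap (Set.Ici (log 2)) := by
  intro s hs t _ hst
  have hy : exp (-s) ≤ 1 / 2 := by
    rw [one_div, ← exp_log (two_pos (α := ℝ)), ← exp_neg]
    exact exp_le_exp.mpr (neg_le_neg hs)
  have hxy : exp (-t) < exp (-s) := exp_lt_exp.mpr (neg_lt_neg hst)
  have hx : 0 < exp (-t) := exp_pos _
  rw [sqrtExpGap_eq, sqrtExpGap_eq]
  exact sqrt_lt_sqrt (by nlinarith) (by nlinarith)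

lemma tsum_sqrtExpGap_succ_lt :
    ∑' k : ℕ, sqrtExpGap (k + 1) < ∑' k : ℕ, sqrtExpGap (log 2 + k) := by
  have hlog : log 2 < 1 := by linarith [log_two_lt_d9]
  have hlt (k : ℕ) : sqrtExpGap (k + 1) < sqrtExpGap (log 2 + k) := by
    have hk : (0 : ℝ) ≤ k := k.cast_nonneg
    exact sqrtExpGap_strictAntiOn (Set.mem_Ici.mpr (by linarith))
      (Set.mem_Ici.mpr (by linarith)) (by linarith)
  exact Summable.tsum_lt_tsum_of_nonneg (fun _ ↦ sqrtExpGap_nonneg _) (fun k ↦ (hlt k).le)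
    (hlt 0) (summable_sqrtExpGap_add_nat _)

-- For `t < 0` both sides vanish: `e^{-t} - e^{-2t} < 0` and `Real.sqrt` is `0` there.
lemma Phihat_eq (t : ℝ) : Phihat t = 2 / π * sqrtExpGap t := by
  rcases le_or_gt 0 t with ht | ht
  · exact if_pos ht
  · rw [Phihat, if_neg (not_le.mpr ht), sqrtExpGap_eq_zero_of_nonpos ht.le, mul_zero]

lemma Phi_eq_tsum_nat {t : ℝ} (ht : t ≤ 1) :
    Phi t = 2 / π * ∑' n : ℕ, sqrtExpGap (t + n) := by
  simp only [Phi, Phihat_eq, tsum_mul_left, tsum_sqrtExpGap_add_int ht]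

lemma Phi_zero : Phi 0 = 2 / π * ∑' k : ℕ, sqrtExpGap (k + 1) := by
  rw [Phi_eq_tsum_nat zero_le_one, (summable_sqrtExpGap_add_nat 0).tsum_eq_zero_add]
  simp [sqrtExpGap_eq_zero_of_nonpos]

theorem Phi_not_constant :
    -- the sum defining Φ converges for every t
    (∀ t : ℝ, Summable (fun k : ℤ => Phihat (t + k))) ∧
    Phi 0 < Phi (Real.log 2) ∧
    -- equivalently, in terms of explicit sums
    (∑' k : ℕ, Real.sqrt (Real.exp (-(k + 1 : ℝ)) - Real.exp (-2 * (k + 1 : ℝ)))) <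
      (∑' k : ℕ, Real.sqrt (Real.exp (-(Real.log 2 + k)) -
        Real.exp (-2 * (Real.log 2 + k)))) ∧
    -- in particular Φ is not a constant function
    ¬ (∀ s t : ℝ, Phi s = Phi t) := by
  have hPhi : Phi 0 < Phi (log 2) := by
    rw [Phi_zero, Phi_eq_tsum_nat (by linarith [log_two_lt_d9])]
    exact mul_lt_mul_of_pos_left tsum_sqrtExpGap_succ_lt (by positivity)
  refine ⟨fun t ↦ ?_, hPhi, tsum_sqrtExpGap_succ_lt, fun h ↦ hPhi.ne (h _ _)⟩
  simpa only [Phihat_eq] using (summable_sqrtExpGap_add_int t).mul_left (2 / π)
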